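/- arXiv:2304.07694 — 11 statements merged into one kernel-verified Lean document; each statement's English description precedes it below -/
import Mathlib

section
/- Let Q = {(A,b) ∈ ℝ³ × (ℝ³)* : b(A) = 1}. If (A₁,b₁), (A₂,b₂) ∈ Q satisfy the horizontality condition b₂ − b₁ = A₁ × A₂ (identifying (ℝ³)* with ℝ³ via the standard inner product), then the scalar triple products satisfy (A₁ × A₂)·(b₁ × b₂) = 0; i.e., the intersection point of the projective lines [b₁], [b₂] lies on the projective line through [A₁] and [A₂]. -/
/-!
Both `A₁` and `A₂` are orthogonal to `A₁ × A₂ = b₂ - b₁`, so each pairs equally with `b₁` and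
`b₂`; on the quadric all four pairings `Aᵢ · bⱼ` are therefore `1`, and the Binet–Cauchy identity
`(A₁ × A₂) · (b₁ × b₂) = (A₁ · b₁)(A₂ · b₂) - (A₁ · b₂)(A₂ · b₁)` gives `1 - 1 = 0`.
-/

open Matrix

namespace Matrix

variable {R : Type*} [CommRing R] {a₁ a₂ b₁ b₂ : Fin 3 → R}

theorem dotProduct_eq_of_sub_eq_crossProduct (h : b₂ - b₁ = crossProduct a₁ a₂) :
    a₁ ⬝ᵥ b₂ = a₁ ⬝ᵥ b₁ ∧ a₂ ⬝ᵥ b₁ = a₂ ⬝ᵥ b₂ := by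
  have h₁ : a₁ ⬝ᵥ (b₂ - b₁) = 0 := h ▸ dot_self_cross a₁ a₂
  have h₂ : a₂ ⬝ᵥ (b₂ - b₁) = 0 := h ▸ dot_cross_self a₁ a₂
  rw [dotProduct_sub, sub_eq_zero] at h₁ h₂
  exact ⟨h₁, h₂.symm⟩

end Matrix

/-- If `(A₁,b₁)` and `(A₂,b₂)` lie on the quadric `{bA = 1}` and satisfy the
horizontality condition `b₂ − b₁ = A₁ × A₂`, then `(A₁ × A₂)·(b₁ × b₂) = 0`;
i.e., the intersection point of the lines `[b₁], [b₂]` lies on the line through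
`[A₁]` and `[A₂]`. -/
theorem horizontal_segment_inscribed
    (A₁ A₂ b₁ b₂ : Fin 3 → ℝ)
    (h1 : b₁ ⬝ᵥ A₁ = 1) (h2 : b₂ ⬝ᵥ A₂ = 1)
    (hhor : b₂ - b₁ = crossProduct A₁ A₂) :
    (crossProduct A₁ A₂) ⬝ᵥ (crossProduct b₁ b₂) = 0 := by
  obtain ⟨h12, h21⟩ := dotProduct_eq_of_sub_eq_crossProduct hhor
  rw [dotProduct_comm] at h1 h2
  rw [cross_dot_cross, h12, h21, h1, h2, sub_self]
end

section
/- Suppose A₁, A₂ ∈ ℝ³, b₁, b₂ ∈ (ℝ³)* represent an inscribed pair of 2-gons: [b₁×b₂] lies on the line through [A₁], [A₂], i.e., A₁ × A₂ = λ₁ b₁ + λ₂ b₂ with λ₁, λ₂ ≠ 0, and bᵢAᵢ ≠ 0 for i = 1,2. Then there exist unique nonzero reals x₁, x₂ such that the rescaled lifts (x₁A₁, b₁/x₁), (x₂A₂, b₂/x₂) satisfy the horizontality condition (x₁A₁) × (x₂A₂) = b₂/x₂ − b₁/x₁; explicitly x₁ = (λ₂/λ₁²)^{1/3} and x₂ =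 −(λ₁/λ₂²)^{1/3}. -/
/-!
By bilinearity, `(x₁A₁) × (x₂A₂) = x₁x₂(λ₁b₁ + λ₂b₂)`, so since `b₁, b₂` are independent the
horizontality condition amounts to the two scalar equations `x₁²x₂λ₁ = -1` and `x₁x₂²λ₂ = 1`.
Dividing the square of one by the other gives `x₁³λ₁² = λ₂` and `x₂³λ₂² = -λ₁`, and conversely;
as cubing is a bijection of `ℝ`, this pins down `x₁, x₂` uniquely.
-/

open Function Filter

theorem Real.pow_left_surjective_of_odd {n : ℕ} (hn : Odd n) : Surjective fun x : ℝ => x ^ n := by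
  have h_top : Tendsto (fun x : ℝ => x ^ n) atTop atTop := tendsto_pow_atTop hn.pos.ne'
  have h_bot : Tendsto (fun x : ℝ => x ^ n) atBot atBot := by
    have := tendsto_neg_atTop_atBot.comp (h_top.comp tendsto_neg_atBot_atTop)
    simpa only [comp_def, hn.neg_pow, neg_neg] using this
  exact (continuous_pow n).surjective h_top h_bot

theorem crossProduct_smul_smul {R : Type*} [CommRing R] (x y : R) (u v : Fin 3 → R) :
    crossProduct (x • u) (y • v) = (x * y) • crossProduct u v := by
  rw [map_smul, LinearMap.map_smul₂, smul_smul, mul_comm]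

theorem smul_pair_eq_inv_smul_sub_inv_smul_iff {K V : Type*} [Field K] [AddCommGroup V]
    [Module K V] {b₁ b₂ : V} (hb : LinearIndependent K ![b₁, b₂]) (l₁ l₂ : K) {x y : K}
    (hx : x ≠ 0) (hy : y ≠ 0) :
    (x * y) • (l₁ • b₁ + l₂ • b₂) = y⁻¹ • b₂ - x⁻¹ • b₁ ↔
      x ^ 2 * y * l₁ = -1 ∧ x * y ^ 2 * l₂ = 1 := by
  have hlhs : (x * y) • (l₁ • b₁ + l₂ • b₂) = (x * y * l₁) • b₁ + (x * y * l₂) • b₂ := by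
    module
  have hrhs : y⁻¹ • b₂ - x⁻¹ • b₁ = (-x⁻¹) • b₁ + y⁻¹ • b₂ := by module
  have h₁ : x * y * l₁ = -x⁻¹ ↔ x ^ 2 * y * l₁ = -1 := by
    rw [← mul_right_inj' hx, mul_neg, mul_inv_cancel₀ hx]
    ring_nf
  have h₂ : x * y * l₂ = y⁻¹ ↔ x * y ^ 2 * l₂ = 1 := by
    rw [← mul_right_inj' hy, mul_inv_cancel₀ hy]
    ring_nf
  rw [hlhs, hrhs, ← h₁, ← h₂]
  refine ⟨hb.eq_of_pair, ?_⟩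
  rintro ⟨e₁, e₂⟩
  rw [e₁, e₂]

theorem cube_equations_iff {K : Type*} [Field K] [LinearOrder K] [IsStrictOrderedRing K]
    {l₁ l₂ x y : K} (hl₁ : l₁ ≠ 0) (hl₂ : l₂ ≠ 0) :
    (x ≠ 0 ∧ y ≠ 0 ∧ x ^ 2 * y * l₁ = -1 ∧ x * y ^ 2 * l₂ = 1) ↔
      x ^ 3 = l₂ / l₁ ^ 2 ∧ y ^ 3 = -(l₁ / l₂ ^ 2) := by
  constructor
  · rintro ⟨-, -, e₁, e₂⟩
    rw [eq_div_iff (pow_ne_zero 2 hl₁), neg_div', eq_div_iff (pow_ne_zero 2 hl₂)]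
    constructor
    · linear_combination (x ^ 2 * y * l₁ - 1) * l₂ * e₁ - x ^ 3 * l₁ ^ 2 * e₂
    · linear_combination y ^ 3 * l₂ ^ 2 * e₁ - (x * y ^ 2 * l₂ + 1) * l₁ * e₂
  · rintro ⟨e₁, e₂⟩
    have hx : x ≠ 0 := ne_zero_pow three_ne_zero (e₁ ▸ div_ne_zero hl₂ (pow_ne_zero 2 hl₁))
    have hy : y ≠ 0 :=
      ne_zero_pow three_ne_zero (e₂ ▸ neg_ne_zero.2 (div_ne_zero hl₁ (pow_ne_zero 2 hl₂)))
    have cube_inj := (by decide : Odd 3).pow_injective (R := K)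
    refine ⟨hx, hy, cube_inj ?_, cube_inj ?_⟩
    · calc (x ^ 2 * y * l₁) ^ 3 = (x ^ 3) ^ 2 * y ^ 3 * l₁ ^ 3 := by ring
        _ = (-1) ^ 3 := by rw [e₁, e₂]; field_simp
    · calc (x * y ^ 2 * l₂) ^ 3 = x ^ 3 * (y ^ 3) ^ 2 * l₂ ^ 3 := by ring
        _ = 1 ^ 3 := by rw [e₁, e₂]; field_simp

theorem unique_horizontal_lift_of_inscribed_2gon_general
    (A₁ A₂ b₁ b₂ : Fin 3 → ℝ) (l₁ l₂ : ℝ)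
    (hl₁ : l₁ ≠ 0) (hl₂ : l₂ ≠ 0)
    (hb : LinearIndependent ℝ ![b₁, b₂])
    (hins : crossProduct A₁ A₂ = l₁ • b₁ + l₂ • b₂) :
    ∃ p : ℝ × ℝ,
      (p.1 ≠ 0 ∧ p.2 ≠ 0 ∧
        crossProduct (p.1 • A₁) (p.2 • A₂) = p.2⁻¹ • b₂ - p.1⁻¹ • b₁) ∧
      (p.1 ^ 3 = l₂ / l₁ ^ 2 ∧ p.2 ^ 3 = -(l₁ / l₂ ^ 2)) ∧
      ∀ q : ℝ × ℝ,
        (q.1 ≠ 0 ∧ q.2 ≠ 0 ∧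
          crossProduct (q.1 • A₁) (q.2 • A₂) = q.2⁻¹ • b₂ - q.1⁻¹ • b₁) →
        q = p := by
  have horizontal_iff (q : ℝ × ℝ) :
      (q.1 ≠ 0 ∧ q.2 ≠ 0 ∧
        crossProduct (q.1 • A₁) (q.2 • A₂) = q.2⁻¹ • b₂ - q.1⁻¹ • b₁) ↔
      q.1 ^ 3 = l₂ / l₁ ^ 2 ∧ q.2 ^ 3 = -(l₁ / l₂ ^ 2) := by
    rw [← cube_equations_iff hl₁ hl₂, crossProduct_smul_smul, hins]
    exact and_congr_right fun hx => and_congr_right fun hy =>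
      smul_pair_eq_inv_smul_sub_inv_smul_iff hb l₁ l₂ hx hy
  have cube_odd : Odd 3 := by decide
  obtain ⟨x, hx⟩ := Real.pow_left_surjective_of_odd cube_odd (l₂ / l₁ ^ 2)
  obtain ⟨y, hy⟩ := Real.pow_left_surjective_of_odd cube_odd (-(l₁ / l₂ ^ 2))
  refine ⟨(x, y), (horizontal_iff (x, y)).2 ⟨hx, hy⟩, ⟨hx, hy⟩, fun q hq => ?_⟩
  obtain ⟨hq₁, hq₂⟩ := (horizontal_iff q).1 hq
  exact Prod.ext (cube_odd.pow_injective (hq₁.trans hx.symm))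
    (cube_odd.pow_injective (hq₂.trans hy.symm))

/-- Given an inscribed pair of 2-gons, represented by `A₁, A₂, b₁, b₂` with
`A₁ × A₂ = λ₁ b₁ + λ₂ b₂` (`λ₁, λ₂ ≠ 0`) and `bᵢAᵢ ≠ 0`, there exist unique
nonzero reals `x₁, x₂` such that the rescaled lifts `(x₁A₁, b₁/x₁)`,
`(x₂A₂, b₂/x₂)` satisfy the horizontality condition
`(x₁A₁) × (x₂A₂) = b₂/x₂ − b₁/x₁`; explicitly `x₁³ = λ₂/λ₁²` and
`x₂³ = −λ₁/λ₂²`, i.e. `x₁ = ∛(λ₂/λ₁²)`, `x₂ = −∛(λ₁/λ₂²)`. -/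
theorem unique_horizontal_lift_of_inscribed_2gon
    (A₁ A₂ b₁ b₂ : Fin 3 → ℝ) (l₁ l₂ : ℝ)
    (hl₁ : l₁ ≠ 0) (hl₂ : l₂ ≠ 0)
    (hb : LinearIndependent ℝ ![b₁, b₂])
    (hins : crossProduct A₁ A₂ = l₁ • b₁ + l₂ • b₂)
    (hbA₁ : b₁ ⬝ᵥ A₁ ≠ 0) (hbA₂ : b₂ ⬝ᵥ A₂ ≠ 0) :
    ∃ p : ℝ × ℝ,
      (p.1 ≠ 0 ∧ p.2 ≠ 0 ∧
        crossProduct (p.1 • A₁) (p.2 • A₂) = p.2⁻¹ • b₂ - p.1⁻¹ • b₁) ∧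
      (p.1 ^ 3 = l₂ / l₁ ^ 2 ∧ p.2 ^ 3 = -(l₁ / l₂ ^ 2)) ∧
      ∀ q : ℝ × ℝ,
        (q.1 ≠ 0 ∧ q.2 ≠ 0 ∧
          crossProduct (q.1 • A₁) (q.2 • A₂) = q.2⁻¹ • b₂ - q.1⁻¹ • b₁) →
        q = p :=
  unique_horizontal_lift_of_inscribed_2gon_general A₁ A₂ b₁ b₂ l₁ l₂ hl₁ hl₂ hb hins
end

section
/- Let (Aᵢ, bᵢ) ∈ Q = {bA = 1} ⊂ ℝ³ × (ℝ³)*, i = 1,2,3, satisfy the two horizontality conditions b₂ − b₁ = A₁ × A₂ and b₃ − b₂ = A₂ × A₃. Then b₃(A₁) + b₁(A₃) = 2. -/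
/-!
Horizontality telescopes to `b₃ − b₁ = A₁ × A₂ + A₂ × A₃`. Pairing this vector with `A₁` and with
`A₃` gives the same triple product `det (A₁, A₂, A₃)`, so `b₃A₁ − b₁A₁ = b₃A₃ − b₁A₃`, and the
quadric conditions at the two ends turn this into the identity.
-/

open Matrix

theorem dotProduct_cross_add_cross_left_eq_right {R : Type*} [CommRing R] (A₁ A₂ A₃ : Fin 3 → R) :
    A₁ ⬝ᵥ (A₁ ⨯₃ A₂ + A₂ ⨯₃ A₃) = A₃ ⬝ᵥ (A₁ ⨯₃ A₂ + A₂ ⨯₃ A₃) := by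
  rw [dotProduct_add, dotProduct_add, dot_self_cross, dot_cross_self, zero_add, add_zero,
    triple_product_permutation A₃ A₁ A₂]

theorem dotProduct_swap_add_of_sub_eq_cross_add_cross {R : Type*} [CommRing R]
    {A₁ A₂ A₃ b₁ b₃ : Fin 3 → R} (h : b₃ - b₁ = A₁ ⨯₃ A₂ + A₂ ⨯₃ A₃) :
    b₃ ⬝ᵥ A₁ + b₁ ⬝ᵥ A₃ = b₁ ⬝ᵥ A₁ + b₃ ⬝ᵥ A₃ := by
  have key := dotProduct_cross_add_cross_left_eq_right A₁ A₂ A₃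
  rw [← h, dotProduct_sub, dotProduct_sub, dotProduct_comm A₁, dotProduct_comm A₁,
    dotProduct_comm A₃, dotProduct_comm A₃] at key
  linear_combination key

theorem horizontal_trigon_key_identity_general
    (A₁ A₂ A₃ b₁ b₂ b₃ : Fin 3 → ℝ)
    (h1 : b₁ ⬝ᵥ A₁ = 1) (h3 : b₃ ⬝ᵥ A₃ = 1)
    (h12 : b₂ - b₁ = crossProduct A₁ A₂)
    (h23 : b₃ - b₂ = crossProduct A₂ A₃) :
    b₃ ⬝ᵥ A₁ + b₁ ⬝ᵥ A₃ = 2 := by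
  have h13 : b₃ - b₁ = A₁ ⨯₃ A₂ + A₂ ⨯₃ A₃ := by
    rw [← h12, ← h23, sub_add_sub_cancel']
  rw [dotProduct_swap_add_of_sub_eq_cross_add_cross h13, h1, h3]
  norm_num

/-- For a horizontal 3-gon on the quadric `{bA = 1}` (with horizontality
conditions `b₂ − b₁ = A₁ × A₂` and `b₃ − b₂ = A₂ × A₃`) one has
`b₃A₁ + b₁A₃ = 2`. -/
theorem horizontal_trigon_key_identity
    (A₁ A₂ A₃ b₁ b₂ b₃ : Fin 3 → ℝ)
    (h1 : b₁ ⬝ᵥ A₁ = 1) (h2 : b₂ ⬝ᵥ A₂ = 1) (h3 : b₃ ⬝ᵥ A₃ = 1)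
    (h12 : b₂ - b₁ = crossProduct A₁ A₂)
    (h23 : b₃ - b₂ = crossProduct A₂ A₃) :
    b₃ ⬝ᵥ A₁ + b₁ ⬝ᵥ A₃ = 2 :=
  horizontal_trigon_key_identity_general A₁ A₂ A₃ b₁ b₂ b₃ h1 h3 h12 h23
end

section
/- Let q₁, q₂, q₃ be three distinct points of the quadric Q = {bA = 1} ⊂ ℝ³ × (ℝ³)* such that each pair (qᵢ, qⱼ) satisfies the horizontality condition bⱼ − bᵢ = Aᵢ × Aⱼ. Then q₁, q₂, q₃ are collinear in ℝ³ × (ℝ³)* ≅ ℝ⁶; i.e., there are no non-degenerate horizontal triangles. -/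
/-!
The horizontality conditions from the first point say `bⱼ = b₁ + A₁ × Aⱼ`, so the three points
are the images of `A₁, A₂, A₃` under the affine map `A ↦ (A, b₁ + A₁ × A)`, and it suffices that
`A₁, A₂, A₃` are collinear. Subtracting the three conditions gives
`(A₂ - A₁) × (A₃ - A₁) = A₂ × A₃ + A₁ × A₂ - A₁ × A₃ = 0`.
-/

open Matrix

theorem Collinear.map {k V₁ V₂ P₁ P₂ : Type*} [DivisionRing k] [AddCommGroup V₁] [Module k V₁]
    [AddTorsor V₁ P₁] [AddCommGroup V₂] [Module k V₂] [AddTorsor V₂ P₂] {s : Set P₁}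
    (h : Collinear k s) (f : P₁ →ᵃ[k] P₂) : Collinear k (f '' s) := by
  rw [collinear_iff_exists_forall_eq_smul_vadd] at h ⊢
  obtain ⟨p₀, v, hv⟩ := h
  refine ⟨f p₀, f.linear v, ?_⟩
  rintro _ ⟨p, hp, rfl⟩
  obtain ⟨r, rfl⟩ := hv p hp
  exact ⟨r, by rw [AffineMap.map_vadd, LinearMap.map_smul]⟩

theorem collinear_of_crossProduct_sub_eq_zero {K : Type*} [Field K] {p₁ p₂ p₃ : Fin 3 → K}
    (h : (p₂ - p₁) ⨯₃ (p₃ - p₁) = 0) : Collinear K {p₁, p₂, p₃} := by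
  by_cases h₁₂ : p₂ - p₁ = 0
  · rw [sub_eq_zero.1 h₁₂, Set.insert_idem]
    exact collinear_pair K p₁ p₃
  obtain ⟨t, ht⟩ : ∃ t : K, t • (p₂ - p₁) = p₃ - p₁ := by
    by_contra! h_indep
    exact crossProduct_ne_zero_iff_linearIndependent.2
      ((LinearIndependent.pair_iff' h₁₂).2 h_indep) h
  have h₃ : p₃ = AffineMap.lineMap p₁ p₂ t := by
    rw [AffineMap.lineMap_apply, vsub_eq_sub, vadd_eq_add, ht, sub_add_cancel]
  rw [Set.pair_comm p₂ p₃, Set.insert_comm p₁ p₃, h₃]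
  exact collinear_insert_of_mem_affineSpan_pair (AffineMap.lineMap_mem_affineSpan_pair t p₁ p₂)

theorem crossProduct_sub_sub_eq_zero_of_horizontal {R : Type*} [CommRing R]
    {A₁ A₂ A₃ b₁ b₂ b₃ : Fin 3 → R} (h₁₂ : b₂ - b₁ = A₁ ⨯₃ A₂) (h₂₃ : b₃ - b₂ = A₂ ⨯₃ A₃)
    (h₁₃ : b₃ - b₁ = A₁ ⨯₃ A₃) : (A₂ - A₁) ⨯₃ (A₃ - A₁) = 0 := by
  calc (A₂ - A₁) ⨯₃ (A₃ - A₁) = A₂ ⨯₃ A₃ + A₁ ⨯₃ A₂ - A₁ ⨯₃ A₃ := by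
        simp only [map_sub, LinearMap.sub_apply, cross_self, ← cross_anticomm A₁ A₂]
        abel
    _ = 0 := by rw [← h₁₂, ← h₂₃, ← h₁₃]; abel

def horizontalLift {R : Type*} [CommRing R] (A₀ b₀ : Fin 3 → R) :
    (Fin 3 → R) →ᵃ[R] (Fin 3 → R) × (Fin 3 → R) :=
  (LinearMap.id.prod (crossProduct A₀)).toAffineMap + AffineMap.const R _ (0, b₀)

theorem horizontalLift_apply {R : Type*} [CommRing R] (A₀ b₀ A : Fin 3 → R) :
    horizontalLift A₀ b₀ A = (A, b₀ + A₀ ⨯₃ A) := by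
  simp [horizontalLift, add_comm]

theorem no_nondegenerate_horizontal_triangles_general
    (A₁ A₂ A₃ b₁ b₂ b₃ : Fin 3 → ℝ)
    (h12 : b₂ - b₁ = crossProduct A₁ A₂)
    (h23 : b₃ - b₂ = crossProduct A₂ A₃)
    (h13 : b₃ - b₁ = crossProduct A₁ A₃) :
    Collinear ℝ ({(A₁, b₁), (A₂, b₂), (A₃, b₃)} :
      Set ((Fin 3 → ℝ) × (Fin 3 → ℝ))) := by
  have h_lift : horizontalLift A₁ b₁ '' {A₁, A₂, A₃} = {(A₁, b₁), (A₂, b₂), (A₃, b₃)} := by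
    simp only [Set.image_insert_eq, Set.image_singleton, horizontalLift_apply, cross_self,
      add_zero, ← h12, ← h13, add_sub_cancel]
  rw [← h_lift]
  exact (collinear_of_crossProduct_sub_eq_zero
    (crossProduct_sub_sub_eq_zero_of_horizontal h12 h23 h13)).map _

/-- Three distinct points of the quadric `{bA = 1} ⊂ ℝ³ × (ℝ³)*` which are
pairwise joined by horizontal segments (`bⱼ − bᵢ = Aᵢ × Aⱼ`) are necessarily
collinear in ℝ⁶: there are no non-degenerate horizontal triangles. -/
theorem no_nondegenerate_horizontal_triangles
    (A₁ A₂ A₃ b₁ b₂ b₃ : Fin 3 → ℝ)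
    (h1 : b₁ ⬝ᵥ A₁ = 1) (h2 : b₂ ⬝ᵥ A₂ = 1) (h3 : b₃ ⬝ᵥ A₃ = 1)
    (hne12 : (A₁, b₁) ≠ (A₂, b₂)) (hne13 : (A₁, b₁) ≠ (A₃, b₃))
    (hne23 : (A₂, b₂) ≠ (A₃, b₃))
    (h12 : b₂ - b₁ = crossProduct A₁ A₂)
    (h23 : b₃ - b₂ = crossProduct A₂ A₃)
    (h13 : b₃ - b₁ = crossProduct A₁ A₃) :
    Collinear ℝ ({(A₁, b₁), (A₂, b₂), (A₃, b₃)} :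
      Set ((Fin 3 → ℝ) × (Fin 3 → ℝ))) :=
  no_nondegenerate_horizontal_triangles_general A₁ A₂ A₃ b₁ b₂ b₃ h12 h23 h13
end

section
/- Let p be a unit quaternion and n ≥ 1, w integers. Then pⁿ = (−1)^w if and only if there exists an integer w' with w' ≡ w (mod 2) such that Re(p) = cos(π w'/n). -/
/-!
Write `p = cos t + u sin t` with `u² = -1`. The subalgebra `ℝ[u]` is a copy of `ℂ` in which `p`
corresponds to a unit complex number `z` with `Re z = Re p`, so the question is one about the unit
circle: there `z ^ n = (-1) ^ w` exactly when `z = exp (π w' / n * I)` with `w' ≡ w [ZMOD 2]`,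
and `Re z` determines `z` up to conjugation, i.e. up to `w' ↦ -w'`, which preserves parity.
-/

theorem Int.ModEq.neg_one_zpow_eq {α : Type*} [DivisionMonoid α] [HasDistribNeg α] {a b : ℤ}
    (h : a ≡ b [ZMOD 2]) : (-1 : α) ^ a = (-1) ^ b := by
  simp only [neg_one_zpow_eq_ite, Int.even_iff, h.eq]

namespace Complex

open scoped Real

theorem exp_pi_mul_div_mul_I_pow (m : ℤ) {n : ℕ} (hn : n ≠ 0) :
    exp (π * m / n * I) ^ n = (-1) ^ m := by
  rw [← exp_nat_mul, show (n : ℂ) * (π * m / n * I) = m * (π * I) by field_simp,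
    exp_int_mul, exp_pi_mul_I]

theorem pow_eq_neg_one_zpow_iff_exists_eq_exp {z : ℂ} (hz : ‖z‖ = 1) {n : ℕ} (hn : n ≠ 0)
    (w : ℤ) : z ^ n = (-1) ^ w ↔ ∃ m : ℤ, m ≡ w [ZMOD 2] ∧ z = exp (π * m / n * I) := by
  constructor
  · intro h
    have hz_exp : z = exp (arg z * I) := by
      simpa [hz] using (norm_mul_exp_arg_mul_I z).symm
    rw [hz_exp, ← exp_nat_mul, ← exp_pi_mul_I, ← exp_int_mul, exp_eq_exp_iff_exists_int] at h
    obtain ⟨k, hk⟩ := h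
    refine ⟨w + 2 * k, Int.modEq_iff_dvd.mpr ⟨-k, by ring⟩, hz_exp.trans ?_⟩
    congr 1
    rw [div_mul_eq_mul_div, eq_div_iff (Nat.cast_ne_zero.mpr hn)]
    push_cast
    linear_combination hk
  · rintro ⟨m, hm, rfl⟩
    rw [exp_pi_mul_div_mul_I_pow m hn, hm.neg_one_zpow_eq]

theorem eq_exp_or_eq_exp_neg_of_re_eq_cos {z : ℂ} (hz : ‖z‖ = 1) {θ : ℝ}
    (h : z.re = Real.cos θ) : z = exp (θ * I) ∨ z = exp (↑(-θ) * I) := by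
  have him : z.im ^ 2 = Real.sin θ ^ 2 := by
    have hnormSq := Complex.sq_norm z
    rw [hz, normSq_apply, h] at hnormSq
    linarith [Real.sin_sq_add_cos_sq θ]
  rcases sq_eq_sq_iff_eq_or_eq_neg.mp him with him | him
  · left
    apply Complex.ext <;> simp [exp_ofReal_mul_I_re, exp_ofReal_mul_I_im, h, him]
  · right
    apply Complex.ext <;>
      simp only [exp_ofReal_mul_I_re, exp_ofReal_mul_I_im, h, him, Real.cos_neg, Real.sin_neg]

theorem pow_eq_neg_one_zpow_iff_exists_re_eq_cos {z : ℂ} (hz : ‖z‖ = 1) {n : ℕ} (hn : n ≠ 0)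
    (w : ℤ) : z ^ n = (-1) ^ w ↔ ∃ m : ℤ, m ≡ w [ZMOD 2] ∧ z.re = Real.cos (π * m / n) := by
  rw [pow_eq_neg_one_zpow_iff_exists_eq_exp hz hn]
  constructor
  · rintro ⟨m, hm, rfl⟩
    exact ⟨m, hm, by exact_mod_cast exp_ofReal_mul_I_re _⟩
  · rintro ⟨m, hm, hre⟩
    rcases eq_exp_or_eq_exp_neg_of_re_eq_cos hz hre with hz' | hz'
    · exact ⟨m, hm, by exact_mod_cast hz'⟩
    · refine ⟨-m, (Int.modEq_iff_dvd.mpr ⟨m, by ring⟩).trans hm, ?_⟩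
      rw [hz']
      congr 2
      push_cast
      ring

end Complex

namespace Quaternion

open scoped Quaternion

theorem normSq_eq_re_sq_add_normSq_im (p : ℍ) : normSq p = p.re ^ 2 + normSq p.im := by
  simp only [normSq_def', re_im, imI_im, imJ_im, imK_im]
  ring

theorem exists_mul_self_eq_neg_one_and_eq_re_add_smul (p : ℍ) :
    ∃ u : ℍ, u * u = -1 ∧ p = p.re + ‖p.im‖ • u := by
  by_cases h : p.im = 0
  · refine ⟨(Complex.I : ℍ), by rw [← coeComplex_mul, Complex.I_mul_I]; ext <;> simp, ?_⟩
    simpa [h] using (re_add_im p).symm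
  · have hnorm : ‖p.im‖ ≠ 0 := norm_ne_zero_iff.mpr h
    refine ⟨‖p.im‖⁻¹ • p.im, ?_, by rw [smul_inv_smul₀ hnorm, re_add_im]⟩
    rw [← sq, sq_eq_neg_normSq.mpr (by simp), normSq_smul, normSq_eq_norm_mul_self]
    field_simp
    simp

theorem exists_algHom_complex_apply_eq (p : ℍ) :
    ∃ (f : ℂ →ₐ[ℝ] ℍ) (z : ℂ), z.re = p.re ∧ ‖z‖ = ‖p‖ ∧ f z = p := by
  obtain ⟨u, hu, hp⟩ := exists_mul_self_eq_neg_one_and_eq_re_add_smul p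
  refine ⟨Complex.liftAux u hu, ⟨p.re, ‖p.im‖⟩, rfl, ?_, ?_⟩
  · have h := normSq_eq_re_sq_add_normSq_im p
    rw [normSq_eq_norm_mul_self, normSq_eq_norm_mul_self] at h
    rw [← sq_eq_sq₀ (norm_nonneg _) (norm_nonneg _), Complex.sq_norm, Complex.normSq_apply]
    dsimp only
    linarith
  · rw [Complex.liftAux_apply]
    exact hp.symm

end Quaternion

/-- For a unit quaternion `p` and integers `n ≥ 1`, `w`: `pⁿ = (−1)^w` iff
there is an integer `w' ≡ w (mod 2)` with `Re p = cos(π w'/n)`. -/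
theorem unit_quaternion_pow_eq_neg_one_pow_iff
    (p : Quaternion ℝ) (hp : ‖p‖ = 1) (n : ℕ) (hn : 1 ≤ n) (w : ℤ) :
    p ^ n = (-1 : Quaternion ℝ) ^ w ↔
      ∃ w' : ℤ, w' ≡ w [ZMOD 2] ∧ p.re = Real.cos (Real.pi * w' / n) := by
  obtain ⟨f, z, hre, hnorm, rfl⟩ := Quaternion.exists_algHom_complex_apply_eq p
  have hf : f z ^ n = (-1) ^ w ↔ z ^ n = (-1) ^ w := by
    rw [← map_pow, ← map_one f, ← map_neg, ← map_zpow₀]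
    exact f.toRingHom.injective.eq_iff
  rw [hf, Complex.pow_eq_neg_one_zpow_iff_exists_re_eq_cos (hnorm.trans hp) (by omega), hre]
end

section
/- Let θ ∈ (0, π), φ ∈ (0, π/2), and let δ ∈ (0, π) be defined by sin(δ/2) = sin φ · sin(θ/2). Let v₀, v₁ be unit vectors in ℝ³ at colatitude φ from the north pole k, with v₁ obtained from v₀ by rotation about k by angle θ. Then (v₀ × v₁)·k = sin θ · sin² φ, ‖v₀ × v₁‖ = sin δ, and the real part of e^{−(θ/2)k} · e^{2δ u₀} (quaternion exponentials, with u₀ = (v₀ × v₁)/‖v₀ × v₁‖) equals cos(θ/2)·[1 − 4 sin²(θ/2) sin² φ]. -/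
open Matrix Real

/-!
Both `v₀` and `v₁` are unit vectors with `v₀ · v₁ = cos²φ + sin²φ cos θ = 1 - 2 sin²φ sin²(θ/2)`,
which is `cos δ` by the definition of `δ`. Lagrange's identity then gives
`‖v₀ × v₁‖² = 1 - cos²δ = sin²δ`. In the quaternion product only the `k`-components of the two
factors interact with the imaginary part, and `sin 2δ · u₀ₖ = 2 cos δ · sin θ sin²φ`, so the real
part is a polynomial in `cos δ`, `sin(θ/2)`, `cos(θ/2)` that collapses once `cos δ` is substituted.
-/

noncomputable def colatitudePoint (φ θ : ℝ) : Fin 3 → ℝ :=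
  ![sin φ * cos θ, sin φ * sin θ, cos φ]

lemma colatitudePoint_zero (φ : ℝ) : colatitudePoint φ 0 = ![sin φ, 0, cos φ] := by
  simp [colatitudePoint]

lemma colatitudePoint_dotProduct (φ α β : ℝ) :
    colatitudePoint φ α ⬝ᵥ colatitudePoint φ β = cos φ ^ 2 + sin φ ^ 2 * cos (β - α) := by
  simp only [colatitudePoint, dotProduct, Fin.sum_univ_three, cons_val_zero, cons_val_one,
    cons_val_two, tail_cons, head_cons, cos_sub]
  ring

lemma colatitudePoint_dotProduct_self (φ θ : ℝ) :
    colatitudePoint φ θ ⬝ᵥ colatitudePoint φ θ = 1 := by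
  rw [colatitudePoint_dotProduct, sub_self, cos_zero, mul_one, add_comm, sin_sq_add_cos_sq]

lemma cross_colatitudePoint_two (φ α β : ℝ) :
    (colatitudePoint φ α ⨯₃ colatitudePoint φ β) 2 = sin φ ^ 2 * sin (β - α) := by
  simp only [colatitudePoint, cross_apply, sin_sub, Fin.isValue, cons_val_zero, cons_val_one,
    cons_val]
  ring

lemma sum_sq_eq_dotProduct_self {R : Type*} [CommSemiring R] (w : Fin 3 → R) :
    w 0 ^ 2 + w 1 ^ 2 + w 2 ^ 2 = w ⬝ᵥ w := by
  simp only [dotProduct, Fin.sum_univ_three, sq]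

lemma cross_dotProduct_cross_self_of_unit {R : Type*} [CommRing R] {u v : Fin 3 → R}
    (hu : u ⬝ᵥ u = 1) (hv : v ⬝ᵥ v = 1) :
    u ⨯₃ v ⬝ᵥ u ⨯₃ v = 1 - (u ⬝ᵥ v) ^ 2 := by
  rw [cross_dot_cross, hu, hv, dotProduct_comm v u]
  ring

lemma cos_eq_one_sub_two_mul_sin_half_sq (x : ℝ) : cos x = 1 - 2 * sin (x / 2) ^ 2 := by
  rw [← cos_two_mul_eq_one_sub, mul_div_cancel₀ x two_ne_zero]

lemma sin_two_mul_mul_inv_sin {x : ℝ} (hx : sin x ≠ 0) :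
    sin (2 * x) * (sin x)⁻¹ = 2 * cos x := by
  rw [sin_two_mul]
  field_simp

lemma Quaternion.re_mk_mul_mk {R : Type*} [CommRing R] (a b c d a' b' c' d' : R) :
    ((⟨a, b, c, d⟩ : Quaternion R) * ⟨a', b', c', d'⟩).re = a * a' - b * b' - c * c' - d * d' :=
  Quaternion.re_mul _ _

lemma cos_half_mul_cos_two_mul_add_eq (θ φ δ : ℝ)
    (hcos : cos δ = 1 - 2 * sin φ ^ 2 * sin (θ / 2) ^ 2) :
    cos (θ / 2) * cos (2 * δ) + sin (θ / 2) * (2 * cos δ * (sin θ * sin φ ^ 2)) =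
      cos (θ / 2) * (1 - 4 * sin (θ / 2) ^ 2 * sin φ ^ 2) := by
  have hsin : sin θ = 2 * sin (θ / 2) * cos (θ / 2) := by
    rw [← sin_two_mul, mul_div_cancel₀ θ two_ne_zero]
  rw [cos_two_mul, hsin, hcos]
  ring

theorem regular_polygon_monodromy_real_part_general
    (θ φ δ : ℝ)
    (hδ : δ ∈ Set.Ioo 0 π)
    (hδdef : sin (δ / 2) = sin φ * sin (θ / 2))
    (v₀ v₁ kvec w u₀ : Fin 3 → ℝ)
    (hv₀ : v₀ = ![sin φ, 0, cos φ])
    (hv₁ : v₁ = ![sin φ * cos θ, sin φ * sin θ, cos φ])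
    (hk : kvec = ![0, 0, 1])
    (hw : w = crossProduct v₀ v₁)
    (hu₀ : u₀ = (Real.sqrt (w 0 ^ 2 + w 1 ^ 2 + w 2 ^ 2))⁻¹ • w) :
    w ⬝ᵥ kvec = sin θ * sin φ ^ 2 ∧
    Real.sqrt (w 0 ^ 2 + w 1 ^ 2 + w 2 ^ 2) = sin δ ∧
    ((⟨cos (θ / 2), 0, 0, -sin (θ / 2)⟩ : Quaternion ℝ) *
        ⟨cos (2 * δ), sin (2 * δ) * u₀ 0, sin (2 * δ) * u₀ 1,
          sin (2 * δ) * u₀ 2⟩).re =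
      cos (θ / 2) * (1 - 4 * sin (θ / 2) ^ 2 * sin φ ^ 2) := by
  have hsinδ : 0 < sin δ := sin_pos_of_pos_of_lt_pi hδ.1 hδ.2
  have hcosδ : cos δ = 1 - 2 * sin φ ^ 2 * sin (θ / 2) ^ 2 := by
    rw [cos_eq_one_sub_two_mul_sin_half_sq, hδdef]
    ring
  rw [← colatitudePoint_zero] at hv₀
  change v₁ = colatitudePoint φ θ at hv₁
  have hdot : v₀ ⬝ᵥ v₁ = cos δ := by
    rw [hv₀, hv₁, colatitudePoint_dotProduct, sub_zero,
      cos_eq_one_sub_two_mul_sin_half_sq θ, hcosδ]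
    linear_combination sin_sq_add_cos_sq φ
  have hw₂ : w 2 = sin θ * sin φ ^ 2 := by
    rw [hw, hv₀, hv₁, cross_colatitudePoint_two, sub_zero, mul_comm]
  have hnorm : √(w 0 ^ 2 + w 1 ^ 2 + w 2 ^ 2) = sin δ := by
    rw [sum_sq_eq_dotProduct_self, hw, cross_dotProduct_cross_self_of_unit
        (hv₀ ▸ colatitudePoint_dotProduct_self φ 0) (hv₁ ▸ colatitudePoint_dotProduct_self φ θ),
      hdot, ← sin_sq, sqrt_sq hsinδ.le]
  have hu₀₂ : u₀ 2 = (sin δ)⁻¹ * w 2 := by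
    rw [hu₀, hnorm, Pi.smul_apply, smul_eq_mul]
  refine ⟨?_, hnorm, ?_⟩
  · simp [hk, hw₂, dotProduct, Fin.sum_univ_three]
  · rw [Quaternion.re_mk_mul_mk, hu₀₂, ← mul_assoc (sin (2 * δ)), sin_two_mul_mul_inv_sin hsinδ.ne', hw₂,
      ← cos_half_mul_cos_two_mul_add_eq θ φ δ hcosδ]
    ring

/-- Key computation for the rolling monodromy of a regular spherical polygon:
with `v₀, v₁` unit vectors at colatitude `φ` from the north pole `k`, `v₁`
obtained from `v₀` by rotation about `k` by angle `θ`, and `δ` defined by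
`sin(δ/2) = sin φ sin(θ/2)`, one has `(v₀ × v₁)·k = sin θ sin²φ`,
`‖v₀ × v₁‖ = sin δ`, and
`Re(e^{−(θ/2)k} e^{2δ u₀}) = cos(θ/2)(1 − 4 sin²(θ/2) sin²φ)`
where `u₀ = (v₀ × v₁)/‖v₀ × v₁‖`. -/
theorem regular_polygon_monodromy_real_part
    (θ φ δ : ℝ) (hθ : θ ∈ Set.Ioo 0 π) (hφ : φ ∈ Set.Ioo 0 (π / 2))
    (hδ : δ ∈ Set.Ioo 0 π)
    (hδdef : sin (δ / 2) = sin φ * sin (θ / 2))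
    (v₀ v₁ kvec w u₀ : Fin 3 → ℝ)
    (hv₀ : v₀ = ![sin φ, 0, cos φ])
    (hv₁ : v₁ = ![sin φ * cos θ, sin φ * sin θ, cos φ])
    (hk : kvec = ![0, 0, 1])
    (hw : w = crossProduct v₀ v₁)
    (hu₀ : u₀ = (Real.sqrt (w 0 ^ 2 + w 1 ^ 2 + w 2 ^ 2))⁻¹ • w) :
    w ⬝ᵥ kvec = sin θ * sin φ ^ 2 ∧
    Real.sqrt (w 0 ^ 2 + w 1 ^ 2 + w 2 ^ 2) = sin δ ∧
    ((⟨cos (θ / 2), 0, 0, -sin (θ / 2)⟩ : Quaternion ℝ) *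
        ⟨cos (2 * δ), sin (2 * δ) * u₀ 0, sin (2 * δ) * u₀ 1,
          sin (2 * δ) * u₀ 2⟩).re =
      cos (θ / 2) * (1 - 4 * sin (θ / 2) ^ 2 * sin φ ^ 2) :=
  regular_polygon_monodromy_real_part_general θ φ δ hδ hδdef v₀ v₁ kvec w u₀ hv₀ hv₁ hk hw hu₀
end

section
/- For every integer n ≥ 6 there exists φ ∈ (0, π/2) such that cos(4π/n) = cos(2π/n)·[1 − 4 sin²(2π/n) sin² φ]. -/
/-!
At `φ = 0` the right-hand side `cos α (1 - 4 sin² α sin² φ)`, with `α = 2π/n`, equals `cos α`, and at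
`φ = π/2` it equals `cos α (1 - 4 sin² α) = cos 3α`. For `n ≥ 6` we have `3α ≤ π`, so
`cos α > cos 2α > cos 3α` and the intermediate value theorem yields `φ ∈ (0, π/2)` with value `cos 2α`.
-/

open Real Set

lemma Real.cos_mul_one_sub_four_mul_sin_sq (x : ℝ) :
    cos x * (1 - 4 * sin x ^ 2) = cos (3 * x) := by
  rw [cos_three_mul, sin_sq]
  ring

lemma Real.Ioo_cos_three_mul_cos_subset_image (α : ℝ) :
    Ioo (cos (3 * α)) (cos α) ⊆
      (fun φ ↦ cos α * (1 - 4 * sin α ^ 2 * sin φ ^ 2)) '' Ioo 0 (π / 2) := by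
  have hf : ContinuousOn (fun φ ↦ cos α * (1 - 4 * sin α ^ 2 * sin φ ^ 2)) (Icc 0 (π / 2)) := by
    fun_prop
  simpa [← cos_mul_one_sub_four_mul_sin_sq] using intermediate_value_Ioo' (by positivity) hf

lemma Real.cos_two_mul_mem_Ioo {α : ℝ} (h0 : 0 < α) (h3 : 3 * α ≤ π) :
    cos (2 * α) ∈ Ioo (cos (3 * α)) (cos α) :=
  ⟨cos_lt_cos_of_nonneg_of_le_pi (by positivity) h3 (by linarith),
    cos_lt_cos_of_nonneg_of_le_pi h0.le (by linarith) (by linarith)⟩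

/-- For every `n ≥ 6` there is `φ ∈ (0, π/2)` with
`cos(4π/n) = cos(2π/n)(1 − 4 sin²(2π/n) sin²φ)`. -/
theorem exists_phi_regular_hexagon_condition (n : ℕ) (hn : 6 ≤ n) :
    ∃ φ : ℝ, 0 < φ ∧ φ < π / 2 ∧
      cos (4 * π / n) =
        cos (2 * π / n) * (1 - 4 * sin (2 * π / n) ^ 2 * sin φ ^ 2) := by
  have hn' : (6 : ℝ) ≤ n := by exact_mod_cast hn
  have hα : 0 < 2 * π / n := by positivity
  have h3α : 3 * (2 * π / n) ≤ π := by
    rw [← mul_div_assoc, div_le_iff₀ (by positivity)]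
    nlinarith [pi_pos]
  obtain ⟨φ, ⟨hφ0, hφ1⟩, hφ⟩ :=
    Ioo_cos_three_mul_cos_subset_image _ (cos_two_mul_mem_Ioo hα h3α)
  refine ⟨φ, hφ0, hφ1, ?_⟩
  rw [show 4 * π / n = 2 * (2 * π / n) by ring, ← hφ]
end

section
/- The map j : Im(ℍ) × ℍ → Im(𝕆) sending (v, x + u) (with u, v imaginary quaternions, x real) to the Zorn matrix with diagonal entries x, −x, upper right entry v + u, and lower left entry v − u, pulls back the split octonion quadratic form ⟨ζ,ζ⟩ = −x² + b·A to the form |v|² − |x + u|² = |v|² − x² − |u|². In particular, j maps S² × S³ into the null cone of Im(𝕆), missing the origin. -/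
open Matrix

theorem Matrix.sub_dotProduct_add {n R : Type*} [Fintype n] [CommRing R] (v u : n → R) :
    (v - u) ⬝ᵥ (v + u) = v ⬝ᵥ v - u ⬝ᵥ u := by
  simp only [sub_dotProduct, dotProduct_add, dotProduct_comm u v]
  abel

theorem eq_zero_of_add_eq_zero_of_sub_eq_zero {M : Type*} [AddCommGroup M] [IsAddTorsionFree M]
    {v u : M} (hadd : v + u = 0) (hsub : v - u = 0) : v = 0 :=
  two_nsmul_eq_zero.mp <| calc
    2 • v = (v + u) + (v - u) := by abel
    _ = 0 := by rw [hadd, hsub, add_zero]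

/-- The map `j : Im(ℍ) × ℍ → Im(𝕆)`, `(v, x+u) ↦ ((x, v+u), (v−u, −x))`,
pulls the split-octonion quadratic form `⟨ζ,ζ⟩ = −x² + b·A` back to
`|v|² − x² − |u|²`; in particular `j` maps `S² × S³` into the null cone of
`Im(𝕆)` and misses the origin. -/
theorem j_pullback_quadratic_form :
    (∀ (v u : Fin 3 → ℝ) (x : ℝ),
      -x ^ 2 + (v - u) ⬝ᵥ (v + u) = v ⬝ᵥ v - x ^ 2 - u ⬝ᵥ u) ∧
    (∀ (v u : Fin 3 → ℝ) (x : ℝ), v ⬝ᵥ v = 1 → x ^ 2 + u ⬝ᵥ u = 1 →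
      -x ^ 2 + (v - u) ⬝ᵥ (v + u) = 0 ∧
      ((x, v + u, v - u) : ℝ × (Fin 3 → ℝ) × (Fin 3 → ℝ)) ≠ (0, 0, 0)) := by
  have pullback : ∀ (v u : Fin 3 → ℝ) (x : ℝ),
      -x ^ 2 + (v - u) ⬝ᵥ (v + u) = v ⬝ᵥ v - x ^ 2 - u ⬝ᵥ u := fun v u x => by
    rw [sub_dotProduct_add]
    ring
  refine ⟨pullback, fun v u x hv hxu => ⟨by rw [pullback]; linarith, ?_⟩⟩
  intro hzero
  simp only [Prod.mk.injEq] at hzero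
  obtain ⟨-, hadd, hsub⟩ := hzero
  have hv0 : v = 0 := eq_zero_of_add_eq_zero_of_sub_eq_zero hadd hsub
  simp [hv0] at hv
end

section
/- The map π∘j : S² × S³ → (C∖{0})/ℝ⁺ is a bijection, where C is the null cone {ζ ∈ Im(𝕆) : ⟨ζ,ζ⟩ = 0}, j(v, x+u) is the Zorn matrix ((x, v+u),(v−u, −x)), and π is the quotient by positive rescaling. In particular, for every nonzero null ζ = ((x, A),(b, −x)), setting v = (A+b)/2 and u = (A−b)/2, one has |x + u| = |v| ≠ 0, and (v/|v|, (x+u)/|v|) is the unique preimage. -/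
/-!
Write `A = v + u` and `b = v - u`. By polarization the null condition `b ⬝ᵥ A = x²` becomes
`|v|² = x² + |u|²`, so a nonzero null vector has `v ≠ 0`. A preimage `(w, y + z)` with scale
`t > 0` must satisfy `t • w = v`, `t • z = u` and `t * y = x`; since `|w| = 1` this forces
`t = |v|`, and conversely `t = |v|` gives a point of `S² × S³` because `|v|² = x² + |u|²`.
-/

open Matrix

section Module

variable {K E : Type*} [Field K] [CharZero K] [AddCommGroup E] [Module K E]

theorem smul_add_eq_and_smul_sub_eq_iff (t : K) (w z A b : E) :
    t • (w + z) = A ∧ t • (w - z) = b ↔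
      t • w = (1 / 2 : K) • (A + b) ∧ t • z = (1 / 2 : K) • (A - b) := by
  constructor
  · rintro ⟨rfl, rfl⟩
    constructor <;> module
  · rintro ⟨hw, hz⟩
    constructor
    · rw [smul_add, hw, hz]; module
    · rw [smul_sub, hw, hz]; module

end Module

section DotProduct

variable {ι : Type*} [Fintype ι]

theorem dotProduct_smul_self {R : Type*} [CommSemiring R] (c : R) (w : ι → R) :
    (c • w) ⬝ᵥ (c • w) = c ^ 2 * (w ⬝ᵥ w) := by
  rw [smul_dotProduct, dotProduct_smul, smul_eq_mul, smul_eq_mul]; ring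

theorem dotProduct_self_nonneg {R : Type*} [CommRing R] [LinearOrder R] [IsStrictOrderedRing R]
    (w : ι → R) : 0 ≤ w ⬝ᵥ w :=
  Finset.sum_nonneg fun i _ => mul_self_nonneg (w i)

theorem dotProduct_self_half_add (A b : ι → ℝ) :
    ((1 / 2 : ℝ) • (A + b)) ⬝ᵥ ((1 / 2 : ℝ) • (A + b)) =
      b ⬝ᵥ A + ((1 / 2 : ℝ) • (A - b)) ⬝ᵥ ((1 / 2 : ℝ) • (A - b)) := by
  simp only [dotProduct_smul_self, add_dotProduct, dotProduct_add, sub_dotProduct,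
    dotProduct_sub, dotProduct_comm A b]
  ring

theorem sqrt_dotProduct_smul_self {t : ℝ} {w : ι → ℝ} (ht : 0 ≤ t) (hw : w ⬝ᵥ w = 1) :
    √((t • w) ⬝ᵥ (t • w)) = t := by
  rw [dotProduct_smul_self, hw, mul_one, Real.sqrt_sq ht]

theorem dotProduct_self_half_add_pos {x : ℝ} {A b : ι → ℝ} (hnull : b ⬝ᵥ A = x ^ 2)
    (hne : ((x, A, b) : ℝ × (ι → ℝ) × (ι → ℝ)) ≠ (0, 0, 0)) :
    0 < ((1 / 2 : ℝ) • (A + b)) ⬝ᵥ ((1 / 2 : ℝ) • (A + b)) := by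
  set v := (1 / 2 : ℝ) • (A + b)
  set u := (1 / 2 : ℝ) • (A - b)
  have hvv : v ⬝ᵥ v = x ^ 2 + u ⬝ᵥ u := hnull ▸ dotProduct_self_half_add A b
  refine (dotProduct_self_nonneg v).lt_of_ne fun h0 => hne ?_
  have hx : x = 0 := by nlinarith [dotProduct_self_nonneg u]
  have hu : u = 0 := dotProduct_self_eq_zero.1 (by nlinarith [dotProduct_self_nonneg u])
  have hv : v = 0 := dotProduct_self_eq_zero.1 h0.symm
  obtain ⟨hA, hb⟩ := (smul_add_eq_and_smul_sub_eq_iff 1 v u A b).2 ⟨one_smul _ _, one_smul _ _⟩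
  simp [← hA, ← hb, hx, hu, hv]

end DotProduct

/-- The map `π ∘ j : S² × S³ → (C∖0)/ℝ⁺` is a bijection: every nonzero null
`ζ = ((x, A), (b, −x))` has, with `v = (A+b)/2`, `u = (A−b)/2` and
`m = |v| = |x + u| ≠ 0`, the unique preimage `(v/m, (x + u)/m)` (together with
the positive scale factor `m`). -/
theorem pi_comp_j_bijective
    (x : ℝ) (A b : Fin 3 → ℝ) (hnull : b ⬝ᵥ A = x ^ 2)
    (hne : ((x, A, b) : ℝ × (Fin 3 → ℝ) × (Fin 3 → ℝ)) ≠ (0, 0, 0)) :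
    let v := (1 / 2 : ℝ) • (A + b)
    let u := (1 / 2 : ℝ) • (A - b)
    let m := Real.sqrt (v ⬝ᵥ v)
    let P : (Fin 3 → ℝ) × ℝ × (Fin 3 → ℝ) × ℝ → Prop := fun p =>
      p.1 ⬝ᵥ p.1 = 1 ∧ p.2.1 ^ 2 + p.2.2.1 ⬝ᵥ p.2.2.1 = 1 ∧ 0 < p.2.2.2 ∧
      p.2.2.2 * p.2.1 = x ∧ p.2.2.2 • (p.1 + p.2.2.1) = A ∧
      p.2.2.2 • (p.1 - p.2.2.1) = b
    Real.sqrt (x ^ 2 + u ⬝ᵥ u) = m ∧ m ≠ 0 ∧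
    P (m⁻¹ • v, x / m, m⁻¹ • u, m) ∧
    ∀ p, P p → p = (m⁻¹ • v, x / m, m⁻¹ • u, m) := by
  intro v u m P
  have hvv : v ⬝ᵥ v = x ^ 2 + u ⬝ᵥ u := hnull ▸ dotProduct_self_half_add A b
  have hm : 0 < m := Real.sqrt_pos.2 (dotProduct_self_half_add_pos hnull hne)
  have hm2 : m ^ 2 = v ⬝ᵥ v := Real.sq_sqrt (dotProduct_self_nonneg v)
  have hmv : m • m⁻¹ • v = v := smul_inv_smul₀ hm.ne' v
  have hmu : m • m⁻¹ • u = u := smul_inv_smul₀ hm.ne' u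
  refine ⟨by rw [← hvv], hm.ne', ⟨?_, ?_, hm, mul_div_cancel₀ x hm.ne',
    (smul_add_eq_and_smul_sub_eq_iff m _ _ A b).2 ⟨hmv, hmu⟩⟩, ?_⟩
  · rw [dotProduct_smul_self, ← hm2]
    field_simp
  · rw [dotProduct_smul_self, div_pow, inv_pow, ← div_eq_inv_mul, ← add_div, ← hvv, ← hm2,
      div_self (pow_ne_zero 2 hm.ne')]
  · rintro ⟨w, y, z, t⟩ ⟨hw, -, ht, hty, hA, hb⟩
    dsimp only at hw ht hty hA hb
    obtain ⟨htw, htz⟩ := (smul_add_eq_and_smul_sub_eq_iff t w z A b).1 ⟨hA, hb⟩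
    obtain rfl : t = m := by rw [← sqrt_dotProduct_smul_self ht.le hw, htw]
    rw [← hty, mul_div_cancel_left₀ y hm.ne']
    simp only [Prod.mk.injEq, eq_inv_smul_iff₀ hm.ne', and_true, true_and]
    exact ⟨htw, htz⟩
end

section
/- Define ρ(T, Q, p) ∈ End(Im(𝕆)) by ρ(T,Q,p)(x, A, b) = (pA + bQ, TA − p×b + 2xQ, Q×A − bT + 2xp), for T ∈ sl₃(ℝ), Q ∈ ℝ³, p ∈ (ℝ³)*. Then the commutator satisfies [ρ(T₁,Q₁,p₁), ρ(T₂,Q₂,p₂)] = ρ(T₃,Q₃,p₃) with T₃ = [T₁,T₂] + 3(Q₁p₂ − Q₂p₁) + (p₁Q₂ − p₂Q₁)I₃, Q₃ = T₁Q₂ − T₂Q₁ − 2p₁×p₂, p₃ = p₁T₂ − p₂T₁ + 2Q₁×Q₂. In particular, the image of ρ is a 14-dimensional Lie subalgebra of End(Im(𝕆)). -/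
open Matrix

/-- The `𝔤₂`-representation map on `Im(𝕆) ≅ ℝ ⊕ ℝ³ ⊕ (ℝ³)*`:
`ρ(T,Q,p)(x, A, b) = (pA + bQ, TA − p×b + 2xQ, Q×A − bT + 2xp)`. -/
def rho (T : Matrix (Fin 3) (Fin 3) ℝ) (Q p : Fin 3 → ℝ) :
    ℝ × (Fin 3 → ℝ) × (Fin 3 → ℝ) → ℝ × (Fin 3 → ℝ) × (Fin 3 → ℝ) :=
  fun ζ =>
    (p ⬝ᵥ ζ.2.1 + ζ.2.2 ⬝ᵥ Q,
     T.mulVec ζ.2.1 - crossProduct p ζ.2.2 + (2 * ζ.1) • Q,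
     crossProduct Q ζ.2.1 - vecMul ζ.2.2 T + (2 * ζ.1) • p)

/-!
Expand both sides component by component. Besides the expansion of the vector triple product and
the symmetries of the scalar triple product, the one identity needed is the derivative at `M = 1`
of `(Mu) × (Mv) = cof(M) (u × v)`, namely `Mᵀ(u × v) + Mu × v + u × Mv = (tr M)(u × v)`.
For traceless `T₁, T₂` its right-hand side vanishes, and this is what cancels the terms of the
`A`- and `b`-components in which some `Tᵢ` meets a cross product.
-/

section CrossProduct

variable {R : Type*} [CommRing R]

theorem cross_vecMul_add_mulVec_cross_add_cross_mulVec (M : Matrix (Fin 3) (Fin 3) R)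
    (u v : Fin 3 → R) :
    (u ⨯₃ v) ᵥ* M + (M *ᵥ u) ⨯₃ v + u ⨯₃ (M *ᵥ v) = M.trace • (u ⨯₃ v) := by
  ext i
  simp only [Pi.add_apply, Pi.smul_apply, smul_eq_mul, vecMul, mulVec, dotProduct,
    Fin.sum_univ_three, trace, diag_apply, cross_apply]
  fin_cases i <;>
  · simp only [Fin.zero_eta, Fin.mk_one, Fin.reduceFinMk, cons_val_zero, cons_val_one, cons_val]
    ring

theorem mulVec_cross_add_vecMul_cross_add_cross_vecMul (M : Matrix (Fin 3) (Fin 3) R)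
    (u v : Fin 3 → R) :
    M *ᵥ (u ⨯₃ v) + (u ᵥ* M) ⨯₃ v + u ⨯₃ (v ᵥ* M) = M.trace • (u ⨯₃ v) := by
  simpa [mulVec_transpose, vecMul_transpose] using
    cross_vecMul_add_mulVec_cross_add_cross_mulVec Mᵀ u v

theorem triple_product_swap (u v w : Fin 3 → R) : u ⬝ᵥ v ⨯₃ w = -(v ⬝ᵥ u ⨯₃ w) := by
  rw [triple_product_permutation v u w, ← cross_anticomm, dotProduct_neg]

end CrossProduct

section Commutator

variable (T₁ T₂ : Matrix (Fin 3) (Fin 3) ℝ) (Q₁ Q₂ p₁ p₂ : Fin 3 → ℝ) (x : ℝ) (A b : Fin 3 → ℝ)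

local notation "ρ₁" => rho T₁ Q₁ p₁
local notation "ρ₂" => rho T₂ Q₂ p₂
local notation "ρ₃" => rho (T₁ * T₂ - T₂ * T₁ + 3 • (vecMulVec Q₁ p₂ - vecMulVec Q₂ p₁)
  + (p₁ ⬝ᵥ Q₂ - p₂ ⬝ᵥ Q₁) • (1 : Matrix (Fin 3) (Fin 3) ℝ))
  (T₁ *ᵥ Q₂ - T₂ *ᵥ Q₁ - 2 • p₁ ⨯₃ p₂) (p₁ ᵥ* T₂ - p₂ ᵥ* T₁ + 2 • Q₁ ⨯₃ Q₂)

theorem rho_commutator_fst :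
    (ρ₁ (ρ₂ (x, A, b)) - ρ₂ (ρ₁ (x, A, b))).1 = (ρ₃ (x, A, b)).1 := by
  simp only [rho, Prod.fst_sub, dotProduct_add, dotProduct_sub, add_dotProduct, sub_dotProduct,
    dotProduct_smul, smul_dotProduct, smul_eq_mul, dotProduct_mulVec, dotProduct_comm (_ ⨯₃ _)]
  linear_combination triple_product_swap p₂ p₁ b - 2 * triple_product_permutation p₁ p₂ b
    - 2 * triple_product_permutation p₂ b p₁ - triple_product_swap Q₂ Q₁ A
    - 2 * triple_product_permutation A Q₁ Q₂

theorem rho_commutator_snd_fst (hT₁ : T₁.trace = 0) (hT₂ : T₂.trace = 0) :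
    (ρ₁ (ρ₂ (x, A, b)) - ρ₂ (ρ₁ (x, A, b))).2.1 = (ρ₃ (x, A, b)).2.1 := by
  have h₁ := mulVec_cross_add_vecMul_cross_add_cross_vecMul T₁ p₂ b
  have h₂ := mulVec_cross_add_vecMul_cross_add_cross_vecMul T₂ p₁ b
  rw [hT₁, zero_smul] at h₁
  rw [hT₂, zero_smul] at h₂
  simp only [rho, Prod.snd_sub, Prod.fst_sub, mulVec_add, mulVec_sub, mulVec_smul, add_mulVec,
    sub_mulVec, smul_mulVec, mulVec_mulVec, one_mulVec, vecMulVec_mulVec, op_smul_eq_smul,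
    map_add, map_sub, map_smul, map_nsmul, LinearMap.add_apply, LinearMap.sub_apply,
    LinearMap.smul_apply, cross_cross_eq_smul_sub_smul, cross_cross_eq_smul_sub_smul',
    dotProduct_comm Q₂ p₁, dotProduct_comm Q₁ p₂, dotProduct_comm b Q₁, dotProduct_comm b Q₂,
    ← cross_anticomm p₂ p₁]
  linear_combination (norm := module) h₂ - h₁

theorem rho_commutator_snd_snd (hT₁ : T₁.trace = 0) (hT₂ : T₂.trace = 0) :
    (ρ₁ (ρ₂ (x, A, b)) - ρ₂ (ρ₁ (x, A, b))).2.2 = (ρ₃ (x, A, b)).2.2 := by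
  have h₁ := cross_vecMul_add_mulVec_cross_add_cross_mulVec T₁ Q₂ A
  have h₂ := cross_vecMul_add_mulVec_cross_add_cross_mulVec T₂ Q₁ A
  rw [hT₁, zero_smul] at h₁
  rw [hT₂, zero_smul] at h₂
  simp only [rho, Prod.snd_sub, vecMul_add, vecMul_sub, vecMul_smul, add_vecMul, sub_vecMul,
    smul_vecMul, vecMul_vecMul, vecMul_one, vecMul_vecMulVec,
    map_add, map_sub, map_smul, map_nsmul, LinearMap.add_apply, LinearMap.sub_apply,
    LinearMap.smul_apply, cross_cross_eq_smul_sub_smul, cross_cross_eq_smul_sub_smul',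
    dotProduct_comm Q₁ b, dotProduct_comm Q₂ b, ← cross_anticomm Q₁ Q₂]
  linear_combination (norm := module) h₂ - h₁

end Commutator

theorem rho_injective :
    Function.Injective
      (fun d : Matrix (Fin 3) (Fin 3) ℝ × (Fin 3 → ℝ) × (Fin 3 → ℝ) => rho d.1 d.2.1 d.2.2) := by
  rintro ⟨T, Q, p⟩ ⟨T', Q', p'⟩ h
  obtain ⟨hQ, hp⟩ : (2 : ℝ) • Q = (2 : ℝ) • Q' ∧ (2 : ℝ) • p = (2 : ℝ) • p' := by
    simpa [rho] using congrFun h (1, 0, 0)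
  have hT : T = T' := ext_iff_mulVec.2 fun A => by
    simpa [rho] using congrArg (·.2.1) (congrFun h (0, A, 0))
  rw [hT, smul_right_injective _ two_ne_zero hQ, smul_right_injective _ two_ne_zero hp]

/-- The commutator identity `[ρ(T₁,Q₁,p₁), ρ(T₂,Q₂,p₂)] = ρ(T₃,Q₃,p₃)` with
`T₃ = [T₁,T₂] + 3(Q₁p₂ − Q₂p₁) + (p₁Q₂ − p₂Q₁)I₃`,
`Q₃ = T₁Q₂ − T₂Q₁ − 2p₁×p₂`, `p₃ = p₁T₂ − p₂T₁ + 2Q₁×Q₂`; in particular the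
image of the injective linear map `ρ` is a 14-dimensional Lie subalgebra of
`End(Im 𝕆)`, a model of `𝔤₂`. -/
theorem rho_commutator (T₁ T₂ : Matrix (Fin 3) (Fin 3) ℝ)
    (hT₁ : T₁.trace = 0) (hT₂ : T₂.trace = 0) (Q₁ Q₂ p₁ p₂ : Fin 3 → ℝ) :
    (∀ ζ : ℝ × (Fin 3 → ℝ) × (Fin 3 → ℝ),
      rho T₁ Q₁ p₁ (rho T₂ Q₂ p₂ ζ) - rho T₂ Q₂ p₂ (rho T₁ Q₁ p₁ ζ) =
        rho (T₁ * T₂ - T₂ * T₁ + 3 • (vecMulVec Q₁ p₂ - vecMulVec Q₂ p₁)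
              + (p₁ ⬝ᵥ Q₂ - p₂ ⬝ᵥ Q₁) • (1 : Matrix (Fin 3) (Fin 3) ℝ))
            (T₁.mulVec Q₂ - T₂.mulVec Q₁ - 2 • crossProduct p₁ p₂)
            (vecMul p₁ T₂ - vecMul p₂ T₁ + 2 • crossProduct Q₁ Q₂) ζ) ∧
    Function.Injective
      (fun d : Matrix (Fin 3) (Fin 3) ℝ × (Fin 3 → ℝ) × (Fin 3 → ℝ) =>
        rho d.1 d.2.1 d.2.2) :=
  ⟨fun ⟨x, A, b⟩ => Prod.ext (rho_commutator_fst T₁ T₂ Q₁ Q₂ p₁ p₂ x A b)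
      (Prod.ext (rho_commutator_snd_fst T₁ T₂ Q₁ Q₂ p₁ p₂ x A b hT₁ hT₂)
        (rho_commutator_snd_snd T₁ T₂ Q₁ Q₂ p₁ p₂ x A b hT₁ hT₂)),
    rho_injective⟩
end

section
/- Let X be the endomorphism of Im(𝕆) = ℝ ⊕ ℝ³ ⊕ (ℝ³)* given by X(x, A, b) = (pA + bQ, TA − p×b + 2xQ, Q×A − bT + 2xp), and let τ̃(x,A,b) = (−x, b, A). Then X commutes with τ̃ modulo the Euler field on the null cone (i.e., for every null (x,A,b) with bA = x², X(τ̃ζ) − τ̃(Xζ) is a scalar multiple of τ̃ζ) if and only if T is antisymmetric (Tᵗ = −T) and Q = −p. -/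
/-!
The defect `ρ(τ̃ζ) − τ̃(ρζ)` depends on `(T, Q, p)` only through `s = Q + p` and the symmetric
part `T + Tᵀ`, and vanishes when both do. Conversely, on the null vectors `(0, eᵢ, 0)` the first
component of `τ̃ζ` is zero, forcing `sᵢ = 0`; on `(1, eⱼ, eⱼ)` the first component then forces the
multiplier to vanish, whence `(T + Tᵀ) eⱼ = 0`.
-/

open Matrix

/-- The involution `τ̃(x, A, b) = (−x, b, A)`. -/
def tauTilde : ℝ × (Fin 3 → ℝ) × (Fin 3 → ℝ) → ℝ × (Fin 3 → ℝ) × (Fin 3 → ℝ) :=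
  fun ζ => (-ζ.1, ζ.2.2, ζ.2.1)

def CommutesModEuler (T : Matrix (Fin 3) (Fin 3) ℝ) (Q p : Fin 3 → ℝ) : Prop :=
  ∀ (x : ℝ) (A b : Fin 3 → ℝ), b ⬝ᵥ A = x ^ 2 →
    ∃ c : ℝ, rho T Q p (tauTilde (x, A, b)) - tauTilde (rho T Q p (x, A, b))
      = c • tauTilde (x, A, b)

theorem rho_tauTilde_sub_tauTilde_rho (T : Matrix (Fin 3) (Fin 3) ℝ) (Q p : Fin 3 → ℝ)
    (x : ℝ) (A b : Fin 3 → ℝ) :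
    rho T Q p (tauTilde (x, A, b)) - tauTilde (rho T Q p (x, A, b)) =
      ((Q + p) ⬝ᵥ (A + b),
       (T + Tᵀ) *ᵥ b - (Q + p) ⨯₃ A - (2 * x) • (Q + p),
       -((T + Tᵀ) *ᵥ A) + (Q + p) ⨯₃ b - (2 * x) • (Q + p)) := by
  simp only [rho, tauTilde, Prod.mk_sub_mk, Prod.mk.injEq, add_mulVec, mulVec_transpose,
    map_add, LinearMap.add_apply, add_dotProduct, dotProduct_add, dotProduct_comm b,
    dotProduct_comm A, smul_add]
  refine ⟨by ring, by module, by module⟩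

theorem add_eq_zero_of_commutesModEuler {T : Matrix (Fin 3) (Fin 3) ℝ} {Q p : Fin 3 → ℝ}
    (h : CommutesModEuler T Q p) : Q + p = 0 := by
  funext i
  obtain ⟨c, hc⟩ := h 0 (Pi.single i 1) 0 (by simp)
  rw [rho_tauTilde_sub_tauTilde_rho] at hc
  simpa [tauTilde] using congrArg Prod.fst hc

theorem add_transpose_eq_zero_of_commutesModEuler {T : Matrix (Fin 3) (Fin 3) ℝ}
    {Q p : Fin 3 → ℝ} (h : CommutesModEuler T Q p) (hQp : Q + p = 0) : T + Tᵀ = 0 := by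
  ext i j
  obtain ⟨c, hc⟩ := h 1 (Pi.single j 1) (Pi.single j 1) (by simp)
  rw [rho_tauTilde_sub_tauTilde_rho, hQp] at hc
  simp only [tauTilde, Prod.smul_mk, Prod.mk.injEq] at hc
  have hc0 : c = 0 := by simpa using hc.1
  simpa [hc0, mulVec_single_one] using congrFun hc.2.1 i

theorem commutesModEuler_of_transpose_eq_neg {T : Matrix (Fin 3) (Fin 3) ℝ}
    (hT : Tᵀ = -T) (p : Fin 3 → ℝ) : CommutesModEuler T (-p) p := fun _ _ _ _ =>
  ⟨0, by simp [rho_tauTilde_sub_tauTilde_rho, hT]⟩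

theorem rho_commutes_with_tau_iff_general (T : Matrix (Fin 3) (Fin 3) ℝ)
    (Q p : Fin 3 → ℝ) :
    (∀ (x : ℝ) (A b : Fin 3 → ℝ), b ⬝ᵥ A = x ^ 2 →
      ∃ c : ℝ, rho T Q p (tauTilde (x, A, b)) - tauTilde (rho T Q p (x, A, b))
        = c • tauTilde (x, A, b)) ↔ (Tᵀ = -T ∧ Q = -p) := by
  refine ⟨fun h => ?_, fun ⟨hT, hQ⟩ => hQ ▸ commutesModEuler_of_transpose_eq_neg hT p⟩
  have hQp := add_eq_zero_of_commutesModEuler h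
  exact ⟨eq_neg_of_add_eq_zero_right (add_transpose_eq_zero_of_commutesModEuler h hQp),
    eq_neg_of_add_eq_zero_left hQp⟩

/-- `X = ρ(T,Q,p)` commutes with `τ̃` modulo the Euler field on the null cone
(`X(τ̃ζ) − τ̃(Xζ)` is a multiple of `τ̃ζ` for every null `ζ`) if and only if
`Tᵗ = −T` and `Q = −p`. -/
theorem rho_commutes_with_tau_iff (T : Matrix (Fin 3) (Fin 3) ℝ)
    (hT : T.trace = 0) (Q p : Fin 3 → ℝ) :
    (∀ (x : ℝ) (A b : Fin 3 → ℝ), b ⬝ᵥ A = x ^ 2 →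
      ∃ c : ℝ, rho T Q p (tauTilde (x, A, b)) - tauTilde (rho T Q p (x, A, b))
        = c • tauTilde (x, A, b)) ↔ (Tᵀ = -T ∧ Q = -p) :=
  rho_commutes_with_tau_iff_general T Q p
end
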